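/- Let E be a strongly connected finite directed graph with no sources and n ≥ 1. Two vertices v, w of E lie in the same connected component of E(n) if and only if v ∼_n w, i.e. there is a path from w to v of length divisible by gcd(P_E, n). Moreover each component of E(n) is strongly connected, so E(n) is strongly connected if and only if gcd(P_E, n) = 1. -/

import Mathlib

/-!
Write `d = gcd(P, n)`. Since every cycle length is a multiple of `P`, all paths between two
given vertices have congruent lengths mod `P`, so `∼_n` is an equivalence relation. An edge
`(e, μ)` of `E(n)` leaves the source of `μ` unchanged unless it completes a block of `n` edges,
whose endpoints are `∼_n`-related; hence the `∼_n`-class of `s(μ)` is constant on components.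

Conversely, following the edges of a path `π` of `E` with `s(π) = r(ν)` walks in `E(n)` from `ν`
to `[πν]_n`, and `[μcν]_n = μ` as soon as `n ∣ |cν|`. A path `c` from `r(ν)` to `s(μ)` can be
lengthened by closed paths at its source; their lengths mod `n` form a subgroup of `ℤ/n`
containing every cycle length, hence `P` and `d`. So if `s(μ) ∼_n s(ν)` we may take
`n ∣ |cν|`, and `E(n)` contains a path from `ν` to `μ`.
-/

/-- A directed graph: vertices, edges, range and source maps. -/
structure DGraph where
  V : Type
  E : Type
  r : E → V
  s : E → V

namespace DGraph

variable {G : DGraph}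

/-- A path in a directed graph: a word of composable edges together with a source vertex
(so that length-zero paths are vertices). -/
structure Path (G : DGraph) where
  src : G.V
  edges : List G.E
  chain : List.Chain' (fun a b => G.s a = G.r b) edges
  srcEq : ∀ a ∈ edges.getLast?, G.s a = src

/-- The range of a path. -/
def Path.rng (p : G.Path) : G.V := p.edges.head?.elim p.src G.r

/-- The length of a path. -/
def Path.length (p : G.Path) : ℕ := p.edges.length

/-- The length-zero path at a vertex. -/
def Path.nil (G : DGraph) (v : G.V) : G.Path :=
  ⟨v, [], List.isChain_nil, by simp⟩

@[simp] theorem Path.length_nil (v : G.V) : (Path.nil G v).length = 0 := rfl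

/-- Prepend an edge to a path. -/
def Path.cons (e : G.E) (p : G.Path) (h : p.rng = G.s e) : G.Path where
  src := p.src
  edges := e :: p.edges
  chain := by
    unfold List.Chain'
    rw [List.isChain_cons]
    refine ⟨fun b hb => ?_, p.chain⟩
    rw [← h]
    simp [Path.rng, Option.mem_def.mp hb]
  srcEq := by
    intro a ha
    cases hp : p.edges with
    | nil =>
      rw [hp] at ha
      simp only [List.getLast?_singleton, Option.mem_def, Option.some.injEq] at ha
      subst ha
      have h0 : p.rng = p.src := by simp [Path.rng, hp]
      rw [← h, h0]
    | cons f t =>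
      apply p.srcEq
      rw [hp]
      rw [hp, List.getLast?_cons_cons] at ha
      exact ha

@[simp] theorem Path.length_cons (e : G.E) (p : G.Path) (h : p.rng = G.s e) :
    (Path.cons e p h).length = p.length + 1 := rfl

/-- Remove the first edge of a path. -/
def Path.tail (p : G.Path) : G.Path where
  src := p.src
  edges := p.edges.tail
  chain := p.chain.tail
  srcEq := by
    intro a ha
    apply p.srcEq
    cases hp : p.edges with
    | nil => rw [hp] at ha; simp at ha
    | cons f t =>
      rw [hp] at ha
      simp only [List.tail_cons] at ha
      cases t with
      | nil => simp at ha
      | cons g u => rw [List.getLast?_cons_cons]; exact ha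

@[simp] theorem Path.length_tail (p : G.Path) : p.tail.length = p.length - 1 := by
  simp [Path.tail, Path.length]

/-- The initial segment of a path consisting of its first `k` edges. -/
def Path.take (p : G.Path) (k : ℕ) : G.Path where
  src := (p.edges.drop k).head?.elim p.src G.r
  edges := p.edges.take k
  chain := p.chain.take k
  srcEq := by
    intro a ha
    have hc : List.Chain' (fun a b => G.s a = G.r b) (p.edges.take k ++ p.edges.drop k) := by
      rw [List.take_append_drop]; exact p.chain
    unfold List.Chain' at hc
    rw [List.isChain_append] at hc
    obtain ⟨-, -, hadj⟩ := hc
    cases hd : p.edges.drop k with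
    | nil =>
      have htake : p.edges.take k = p.edges := by
        have h1 := List.take_append_drop k p.edges
        rw [hd, List.append_nil] at h1
        exact h1
      simp only [List.head?_nil, Option.elim]
      exact p.srcEq a (htake ▸ ha)
    | cons f t =>
      simp only [List.head?_cons, Option.elim]
      exact hadj a ha f (by rw [hd]; simp)

/-- `[μ]_n` : the initial segment of `μ` of length `|μ| mod n`. -/
def Path.trunc (m : ℕ) (p : G.Path) : G.Path := p.take (p.length % m)

/-- Concatenation of paths, `p` followed after `q` (so `p.append q` has range the range of `p`
and source the source of `q`). -/
def Path.append (p q : G.Path) (h : p.src = q.rng) : G.Path where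
  src := q.src
  edges := p.edges ++ q.edges
  chain := by
    unfold List.Chain'
    rw [List.isChain_append]
    refine ⟨p.chain, q.chain, fun a ha b hb => ?_⟩
    rw [p.srcEq a ha, h]
    simp [Path.rng, Option.mem_def.mp hb]
  srcEq := by
    intro a ha
    cases hq : q.edges with
    | nil =>
      rw [hq, List.append_nil] at ha
      have h0 : q.rng = q.src := by simp [Path.rng, hq]
      rw [p.srcEq a ha, h, h0]
    | cons f t =>
      apply q.srcEq
      rw [hq]
      rw [hq, List.getLast?_append_cons] at ha
      exact ha

/-- A graph is row-finite if every vertex receives finitely many edges. -/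
def RowFinite (G : DGraph) : Prop := ∀ v : G.V, {e : G.E | G.r e = v}.Finite

/-- A graph has no sources if every vertex receives an edge. -/
def NoSources (G : DGraph) : Prop := ∀ v : G.V, ∃ e : G.E, G.r e = v

/-- A graph is strongly connected if for all vertices `v, w` there is a path from `w` to `v`. -/
def StronglyConnected (G : DGraph) : Prop :=
  ∀ v w : G.V, ∃ p : G.Path, p.src = w ∧ p.rng = v

/-- The set of paths of length less than `n`. -/
abbrev PathLt (G : DGraph) (n : ℕ) := {p : G.Path // p.length < n}

/-- The graph `E(n)` of Kribs and Solel: vertices are paths of length `< n`, and edges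
are pairs `(e, μ)` with `r(μ) = s(e)` and `|μ| < n`, with source `μ` and range `[eμ]_n`. -/
def Eln (G : DGraph) (n : ℕ) : DGraph where
  V := PathLt G n
  E := {q : G.E × G.Path // q.2.length + 1 ≤ n ∧ q.2.rng = G.s q.1}
  s := fun q => ⟨q.1.2, Nat.lt_of_succ_le q.2.1⟩
  r := fun q =>
    if h : q.1.2.length + 1 < n then
      ⟨Path.cons q.1.1 q.1.2 q.2.2, by simpa using h⟩
    else
      ⟨Path.nil G (G.r q.1.1), Nat.lt_of_lt_of_le (Nat.succ_pos _) q.2.1⟩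

/-- A vertex of `E`, regarded as a length-zero vertex of `E(n)`. -/
def vtx (G : DGraph) (n : ℕ) (hn : 0 < n) (v : G.V) : PathLt G n :=
  ⟨Path.nil G v, by simpa using hn⟩

/-- `d` is the greatest common divisor of the set `S` of natural numbers. -/
def IsGCDOf (d : ℕ) (S : Set ℕ) : Prop :=
  (∀ k ∈ S, d ∣ k) ∧ ∀ c : ℕ, (∀ k ∈ S, c ∣ k) → c ∣ d

/-- The set of lengths of (nonempty) cycles of `G`. -/
def CycleLengths (G : DGraph) : Set ℕ :=
  {k | ∃ p : G.Path, p.rng = p.src ∧ p.edges ≠ [] ∧ p.length = k}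

/-- The set of lengths of (nonempty) cycles of `G` based at `v`. -/
def CycleLengthsAt (G : DGraph) (v : G.V) : Set ℕ :=
  {k | ∃ p : G.Path, p.src = v ∧ p.rng = v ∧ p.edges ≠ [] ∧ p.length = k}

/-- The relation `v ∼ w` iff there is a path from `w` to `v` whose length is divisible by `d`. -/
def SimRel (G : DGraph) (d : ℕ) (v w : G.V) : Prop :=
  ∃ p : G.Path, p.src = w ∧ p.rng = v ∧ d ∣ p.length

/-- The connected-component relation of a graph: the smallest equivalence relation
identifying the range and the source of each edge. -/
def Comp (G : DGraph) : G.V → G.V → Prop :=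
  Relation.EqvGen (fun a b => ∃ f : G.E, G.r f = a ∧ G.s f = b)

/-- The adjacency matrix of `E(n)` acting on vectors indexed by `E^{<n}`. -/
noncomputable def Aact (G : DGraph) (n : ℕ) (g : PathLt G n → ℝ) (v : PathLt G n) : ℝ :=
  ∑ᶠ (f : (Eln G n).E) (_ : (Eln G n).r f = v), g ((Eln G n).s f)

/-- The pushforward of a vector on `E^{<n}` along `ν ↦ [ν]_m`. -/
noncomputable def pushf (G : DGraph) (n m : ℕ) (g : PathLt G n → ℝ) (μ : PathLt G m) : ℝ :=
  ∑ᶠ (ν : PathLt G n) (_ : Path.trunc m ν.1 = μ.1), g ν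

instance : TopologicalSpace G.Path := ⊥

/-- The inverse limit `lim← E^{<n_k}` along the truncation maps. -/
def InvLim (G : DGraph) (n : ℕ → ℕ) : Type :=
  {f : (k : ℕ) → PathLt G (n k) // ∀ k, Path.trunc (n k) (f (k+1)).1 = (f k).1}

instance (G : DGraph) (n : ℕ → ℕ) : TopologicalSpace (InvLim G n) :=
  inferInstanceAs (TopologicalSpace
    {f : (k : ℕ) → PathLt G (n k) // ∀ k, Path.trunc (n k) (f (k+1)).1 = (f k).1})

noncomputable instance (G : DGraph) (n : ℕ → ℕ) : MeasurableSpace (InvLim G n) := borel _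

end DGraph

theorem ZMod.neg_mem_addSubmonoid {n : ℕ} [NeZero n] (M : AddSubmonoid (ZMod n)) {x : ZMod n}
    (hx : x ∈ M) : -x ∈ M := by
  have h : (n - 1) • x + x = 0 := by
    rw [← succ_nsmul, Nat.sub_add_cancel NeZero.one_le, nsmul_eq_mul, ZMod.natCast_self, zero_mul]
  rw [neg_eq_of_add_eq_zero_left h]
  exact M.nsmul_mem hx _

namespace DGraph

variable {G : DGraph}

namespace Path

theorem ext {p q : G.Path} (hs : p.src = q.src) (he : p.edges = q.edges) : p = q := by
  cases p; cases q
  subst hs he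
  rfl

@[simp] theorem src_nil (v : G.V) : (Path.nil G v).src = v := rfl

@[simp] theorem rng_nil (v : G.V) : (Path.nil G v).rng = v := rfl

@[simp] theorem src_cons (e : G.E) (p : G.Path) (h : p.rng = G.s e) :
    (p.cons e h).src = p.src := rfl

@[simp] theorem rng_cons (e : G.E) (p : G.Path) (h : p.rng = G.s e) :
    (p.cons e h).rng = G.r e := rfl

@[simp] theorem src_append (p q : G.Path) (h : p.src = q.rng) : (p.append q h).src = q.src := rfl

@[simp] theorem length_append (p q : G.Path) (h : p.src = q.rng) :
    (p.append q h).length = p.length + q.length :=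
  List.length_append

@[simp] theorem rng_append (p q : G.Path) (h : p.src = q.rng) : (p.append q h).rng = p.rng := by
  cases hp : p.edges with
  | nil => simp [rng, append, hp, h]
  | cons a t => simp [rng, append, hp]

theorem nil_append (v : G.V) (q : G.Path) (h : (Path.nil G v).src = q.rng) :
    (Path.nil G v).append q h = q :=
  ext rfl rfl

theorem cons_append (e : G.E) (p q : G.Path) (hp : p.rng = G.s e) (h : p.src = q.rng) :
    (p.cons e hp).append q h = (p.append q h).cons e (by rwa [rng_append]) :=
  ext rfl rfl

theorem eq_nil_of_edges_eq_nil {p : G.Path} (hp : p.edges = []) : p = Path.nil G p.src :=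
  ext rfl hp

theorem eq_cons_tail {p : G.Path} {e : G.E} {l : List G.E} (hp : p.edges = e :: l) :
    ∃ h : p.tail.rng = G.s e, p = p.tail.cons e h := by
  have htail : p.tail.edges = l := by simp [tail, hp]
  refine ⟨?_, ext rfl (by simp [cons, hp, htail])⟩
  cases l with
  | nil =>
    simp only [rng, htail, List.head?_nil, Option.elim_none]
    exact (p.srcEq e (by simp [hp])).symm
  | cons f t =>
    have hc := p.chain
    unfold List.Chain' at hc
    rw [hp, List.isChain_cons_cons] at hc
    simp [rng, htail, hc.1]

@[elab_as_elim]
theorem induction_on {motive : G.Path → Prop} (p : G.Path)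
    (nil : ∀ v, motive (Path.nil G v))
    (cons : ∀ e p (h : p.rng = G.s e), motive p → motive (p.cons e h)) : motive p := by
  induction hl : p.edges generalizing p with
  | nil => rw [eq_nil_of_edges_eq_nil hl]; exact nil _
  | cons e l ih =>
    obtain ⟨h, hp⟩ := eq_cons_tail hl
    rw [hp]
    exact cons e _ h (ih _ (by simp [tail, hl]))

@[simp] theorem rng_take (p : G.Path) (k : ℕ) : (p.take k).rng = p.rng := by
  cases k <;> cases hp : p.edges <;> simp [rng, take, hp]

theorem take_length (p : G.Path) : p.take p.length = p :=
  ext (by simp [take, length]) (List.take_length)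

theorem take_zero (p : G.Path) : p.take 0 = Path.nil G p.rng :=
  ext rfl rfl

theorem take_succ_cons (e : G.E) (p : G.Path) (h : p.rng = G.s e) (k : ℕ) :
    (p.cons e h).take (k + 1) = (p.take k).cons e (by rwa [rng_take]) :=
  ext rfl rfl

theorem take_length_append (p q : G.Path) (h : p.src = q.rng) :
    (p.append q h).take p.length = p :=
  ext (by simpa [take, append, length, rng] using h.symm) (by simp [take, append, length])

theorem append_assoc (p q r : G.Path) (hpq : p.src = q.rng) (hqr : q.src = r.rng) :
    (p.append q hpq).append r hqr = p.append (q.append r hqr) (by rwa [rng_append]) :=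
  ext rfl (List.append_assoc _ _ _)

theorem trunc_append_append_of_dvd {n : ℕ} {p q r : G.Path} (hp : p.length < n)
    (hdvd : n ∣ q.length + r.length) (hpq : p.src = q.rng) (hqr : q.src = r.rng) :
    ((p.append q hpq).append r hqr).trunc n = p := by
  obtain ⟨k, hk⟩ := hdvd
  rw [append_assoc, trunc, length_append, length_append, hk, Nat.add_mul_mod_self_left,
    Nat.mod_eq_of_lt hp, take_length_append]

theorem length_trunc (n : ℕ) (p : G.Path) : (p.trunc n).length = p.length % n := by
  simpa [trunc, take, length] using Nat.mod_le _ _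

theorem length_trunc_lt {n : ℕ} (hn : 0 < n) (p : G.Path) : (p.trunc n).length < n :=
  p.length_trunc n ▸ Nat.mod_lt _ hn

/-- `[p]_n` as a vertex of `E(n)`. -/
def truncLt {n : ℕ} (hn : 0 < n) (p : G.Path) : (Eln G n).V :=
  ⟨p.trunc n, p.length_trunc_lt hn⟩

end Path

def Adj (G : DGraph) (v w : G.V) : Prop := ∃ e : G.E, G.s e = v ∧ G.r e = w

theorem Path.reflTransGen_adj (p : G.Path) : Relation.ReflTransGen G.Adj p.src p.rng := by
  induction p using Path.induction_on with
  | nil v => exact .refl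
  | cons e p h ih => exact ih.tail ⟨e, h.symm, rfl⟩

theorem exists_path_of_reflTransGen {v w : G.V} (h : Relation.ReflTransGen G.Adj v w) :
    ∃ p : G.Path, p.src = v ∧ p.rng = w := by
  induction h with
  | refl => exact ⟨Path.nil G v, rfl, rfl⟩
  | tail _ hadj ih =>
    obtain ⟨p, hs, hr⟩ := ih
    obtain ⟨e, he, rfl⟩ := hadj
    exact ⟨p.cons e (hr.trans he.symm), hs, rfl⟩

theorem comp_of_reflTransGen {v w : G.V} (h : Relation.ReflTransGen G.Adj v w) : Comp G w v :=
  Relation.EqvGen.mono (fun _ _ ⟨e, hs, hr⟩ => ⟨e, hr, hs⟩) _ _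
    (Relation.EqvGen.reflTransGen_le_eqvGen _ _ _ (Relation.reflTransGen_swap.mpr h))

section Period

variable {P : ℕ}

theorem IsGCDOf.dvd_length_of_rng_eq_src (hP : IsGCDOf P (CycleLengths G)) {c : G.Path}
    (hc : c.rng = c.src) : P ∣ c.length := by
  by_cases h : c.edges = []
  · simp [Path.length, h]
  · exact hP.1 _ ⟨c, hc, h, rfl⟩

theorem length_modEq_of_src_rng (hsc : StronglyConnected G) (hP : IsGCDOf P (CycleLengths G))
    {p q : G.Path} (hs : p.src = q.src) (hr : p.rng = q.rng) : p.length ≡ q.length [MOD P] := by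
  obtain ⟨r, hr₁, hr₂⟩ := hsc p.src p.rng
  have hp := hP.dvd_length_of_rng_eq_src (c := r.append p hr₁) (by simp [hr₂])
  have hq := hP.dvd_length_of_rng_eq_src (c := r.append q (hr₁.trans hr)) (by simp [hr₂, hs])
  rw [Path.length_append, ← Nat.modEq_zero_iff_dvd] at hp hq
  exact Nat.ModEq.add_left_cancel' _ (hp.trans hq.symm)

variable {d : ℕ}

theorem SimRel.dvd_length (hsc : StronglyConnected G) (hP : IsGCDOf P (CycleLengths G))
    (hd : d ∣ P) {v w : G.V} (h : SimRel G d v w) {p : G.Path} (hs : p.src = w)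
    (hr : p.rng = v) : d ∣ p.length := by
  obtain ⟨q, hqs, hqr, hq⟩ := h
  exact ((length_modEq_of_src_rng hsc hP (hs.trans hqs.symm) (hr.trans hqr.symm)).dvd_iff hd).mpr hq

theorem simRel_equivalence (hsc : StronglyConnected G) (hP : IsGCDOf P (CycleLengths G))
    (hd : d ∣ P) : Equivalence (SimRel G d) where
  refl v := ⟨Path.nil G v, rfl, rfl, dvd_zero d⟩
  symm := by
    rintro v w ⟨p, rfl, rfl, hp⟩
    obtain ⟨q, hqs, hqr⟩ := hsc p.src p.rng
    have hcycle := SimRel.dvd_length hsc hP hd (⟨Path.nil G p.src, rfl, rfl, dvd_zero d⟩ :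
      SimRel G d p.src p.src) (p := q.append p hqs) rfl (by simp [hqr])
    rw [Path.length_append] at hcycle
    exact ⟨q, hqs, hqr, (Nat.dvd_add_left hp).mp hcycle⟩
  trans := by
    rintro u v w ⟨p, hps, hpr, hp⟩ ⟨q, hqs, hqr, hq⟩
    exact ⟨p.append q (hps.trans hqr.symm), hqs, by simp [hpr], by simpa using dvd_add hp hq⟩

variable (G) in
def closedLengthsMod (n : ℕ) [NeZero n] (w : G.V) : AddSubgroup (ZMod n) :=
  let M : AddSubmonoid (ZMod n) :=
    { carrier := {x | ∃ γ : G.Path, γ.src = w ∧ γ.rng = w ∧ (γ.length : ZMod n) = x}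
      zero_mem' := ⟨Path.nil G w, rfl, rfl, Nat.cast_zero⟩
      add_mem' := by
        rintro _ _ ⟨γ, hγs, hγr, rfl⟩ ⟨δ, hδs, hδr, rfl⟩
        exact ⟨γ.append δ (hγs.trans hδr.symm), hδs, by simp [hγr], by simp⟩ }
  { M with neg_mem' := ZMod.neg_mem_addSubmonoid M }

theorem mem_closedLengthsMod {n : ℕ} [NeZero n] {w : G.V} {x : ZMod n} :
    x ∈ closedLengthsMod G n w ↔
      ∃ γ : G.Path, γ.src = w ∧ γ.rng = w ∧ (γ.length : ZMod n) = x :=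
  Iff.rfl

theorem natCast_mem_closedLengthsMod (hsc : StronglyConnected G) {n : ℕ} [NeZero n] (w : G.V)
    {ℓ : ℕ} (hℓ : ℓ ∈ CycleLengths G) : (ℓ : ZMod n) ∈ closedLengthsMod G n w := by
  obtain ⟨c, hc, -, rfl⟩ := hℓ
  obtain ⟨g₁, hg₁s, hg₁r⟩ := hsc c.src w
  obtain ⟨g₂, hg₂s, hg₂r⟩ := hsc w c.src
  have hdetour :
      ((g₂.length + (c.length + g₁.length) : ℕ) : ZMod n) ∈ closedLengthsMod G n w :=
    ⟨g₂.append (c.append g₁ hg₁r.symm) (by simp [hg₂s, hc]), hg₁s, by simp [hg₂r], by simp⟩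
  have hround : ((g₂.length + g₁.length : ℕ) : ZMod n) ∈ closedLengthsMod G n w :=
    ⟨g₂.append g₁ (hg₂s.trans hg₁r.symm), hg₁s, by simp [hg₂r], by simp⟩
  convert sub_mem hdetour hround using 1
  push_cast
  ring

theorem intCast_mem_closedLengthsMod (hsc : StronglyConnected G) (hP : IsGCDOf P (CycleLengths G))
    {n : ℕ} [NeZero n] (w : G.V) {k : ℤ} (hk : (P.gcd n : ℤ) ∣ k) :
    (k : ZMod n) ∈ closedLengthsMod G n w := by
  obtain ⟨a, ha⟩ :=
    Int.subgroup_cyclic ((closedLengthsMod G n w).comap (Int.castAddHom (ZMod n)))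
  have hmem {j : ℤ} : (j : ZMod n) ∈ closedLengthsMod G n w ↔ a ∣ j := by
    rw [← Int.mem_zmultiples_iff, AddSubgroup.zmultiples_eq_closure, ← ha]
    rfl
  have hnat {j : ℕ} (hj : (j : ZMod n) ∈ closedLengthsMod G n w) : a.natAbs ∣ j :=
    Int.natCast_dvd_natCast.mp (Int.natAbs_dvd.mpr (hmem.mp (by rwa [Int.cast_natCast])))
  have haP : a.natAbs ∣ P := hP.2 _ fun ℓ hℓ => hnat (natCast_mem_closedLengthsMod hsc w hℓ)
  have han : a.natAbs ∣ n := hnat (by rw [ZMod.natCast_self]; exact zero_mem _)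
  exact hmem.mpr ((Int.natAbs_dvd.mp (Int.natCast_dvd_natCast.mpr (Nat.dvd_gcd haP han))).trans hk)

theorem exists_path_dvd_length_add (hsc : StronglyConnected G) (hP : IsGCDOf P (CycleLengths G))
    {n : ℕ} (hn : 0 < n) (c : G.Path) {m : ℕ} (h : P.gcd n ∣ c.length + m) :
    ∃ c' : G.Path, c'.src = c.src ∧ c'.rng = c.rng ∧ n ∣ c'.length + m := by
  have : NeZero n := ⟨hn.ne'⟩
  obtain ⟨γ, hγs, hγr, hγ⟩ := mem_closedLengthsMod.mp
    (intCast_mem_closedLengthsMod hsc hP c.src (k := -((c.length + m : ℕ) : ℤ))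
      ((Int.natCast_dvd_natCast.mpr h).neg_right))
  refine ⟨c.append γ hγr.symm, hγs, by simp, (ZMod.natCast_eq_zero_iff _ _).mp ?_⟩
  push_cast at hγ ⊢
  rw [Path.length_append]
  push_cast
  rw [hγ]
  ring

end Period

namespace Eln

variable {n : ℕ}

theorem r_mk_of_lt {e : G.E} {p : G.Path} (hle : p.length + 1 ≤ n) (he : p.rng = G.s e)
    (h : p.length + 1 < n) :
    ((Eln G n).r (⟨(e, p), hle, he⟩ : (Eln G n).E)).1 = p.cons e he := by
  simp [Eln, h]

theorem r_mk_of_not_lt {e : G.E} {p : G.Path} (hle : p.length + 1 ≤ n) (he : p.rng = G.s e)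
    (h : ¬ p.length + 1 < n) :
    ((Eln G n).r (⟨(e, p), hle, he⟩ : (Eln G n).E)).1 = Path.nil G (G.r e) := by
  simp [Eln, h]

theorem adj_truncLt (hn : 0 < n) (p : G.Path) (e : G.E) (h : p.rng = G.s e) :
    (Eln G n).Adj (p.truncLt hn) ((p.cons e h).truncLt hn) := by
  have he : (p.trunc n).rng = G.s e := by rwa [Path.trunc, Path.rng_take]
  refine ⟨⟨(e, p.trunc n), p.length_trunc_lt hn, he⟩, rfl, Subtype.ext ?_⟩
  have hmod : (p.length + 1) % n = (p.length % n + 1) % n := (Nat.mod_add_mod _ _ _).symm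
  by_cases hlt : p.length % n + 1 < n
  · rw [r_mk_of_lt (p.length_trunc_lt hn) he (by rwa [Path.length_trunc])]
    simp only [Path.truncLt, Path.trunc, Path.length_cons, hmod, Nat.mod_eq_of_lt hlt,
      Path.take_succ_cons]
  · rw [r_mk_of_not_lt (p.length_trunc_lt hn) he (by rwa [Path.length_trunc])]
    have hn' : p.length % n + 1 = n := by have := Nat.mod_lt p.length hn; omega
    simp only [Path.truncLt, Path.trunc, Path.length_cons, hmod, hn', Nat.mod_self,
      Path.take_zero, Path.rng_cons]

theorem reflTransGen_truncLt_append (hn : 0 < n) (q p : G.Path) (h : q.src = p.rng) :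
    Relation.ReflTransGen (Eln G n).Adj (p.truncLt hn) ((q.append p h).truncLt hn) := by
  induction q using Path.induction_on with
  | nil v => rw [Path.nil_append]
  | cons e q he ih => rw [Path.cons_append e q p he h]; exact (ih h).tail (adj_truncLt hn _ e _)

theorem truncLt_eq_self (hn : 0 < n) (μ : (Eln G n).V) : μ.1.truncLt hn = μ :=
  Subtype.ext <| show μ.1.take (μ.1.length % n) = μ.1 by
    rw [Nat.mod_eq_of_lt μ.2, Path.take_length]

theorem reflTransGen_of_path (hn : 0 < n) {μ ν : (Eln G n).V} (c : G.Path)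
    (hs : c.src = ν.1.rng) (hr : c.rng = μ.1.src) (hdvd : n ∣ c.length + ν.1.length) :
    Relation.ReflTransGen (Eln G n).Adj ν μ := by
  have key := reflTransGen_truncLt_append hn (μ.1.append c hr.symm) ν.1 hs
  have hμ : ((μ.1.append c hr.symm).append ν.1 hs).truncLt hn = μ :=
    Subtype.ext (Path.trunc_append_append_of_dvd μ.2 hdvd _ _)
  rwa [hμ, truncLt_eq_self] at key

theorem rel_src_of_comp {R : G.V → G.V → Prop} (hR : Equivalence R)
    (hblock : ∀ p : G.Path, p.length = n → R p.rng p.src) {μ ν : (Eln G n).V}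
    (h : Comp (Eln G n) μ ν) : R μ.1.src ν.1.src := by
  refine (InvImage.equivalence _ (fun μ : (Eln G n).V => μ.1.src) hR).eqvGen_iff.mp
    (Relation.EqvGen.mono ?_ _ _ h)
  rintro _ _ ⟨⟨⟨e, p⟩, hle, he⟩, rfl, rfl⟩
  by_cases hlt : p.length + 1 < n
  · show R ((Eln G n).r _).1.src p.src
    rw [r_mk_of_lt hle he hlt]
    exact hR.refl _
  · show R ((Eln G n).r _).1.src p.src
    rw [r_mk_of_not_lt hle he hlt]
    exact hblock (p.cons e he) (by rw [Path.length_cons]; exact le_antisymm hle (not_lt.mp hlt))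

theorem reflTransGen_of_simRel (hn : 0 < n) (hsc : StronglyConnected G) {P : ℕ}
    (hP : IsGCDOf P (CycleLengths G)) {μ ν : (Eln G n).V}
    (h : SimRel G (P.gcd n) μ.1.src ν.1.src) : Relation.ReflTransGen (Eln G n).Adj ν μ := by
  obtain ⟨c, hcs, hcr⟩ := hsc μ.1.src ν.1.rng
  have hdvd : P.gcd n ∣ c.length + ν.1.length := by
    simpa using h.dvd_length hsc hP (Nat.gcd_dvd_left P n) (p := c.append ν.1 hcs) rfl
      (by simpa using hcr)
  obtain ⟨c', hc's, hc'r, hc'⟩ := exists_path_dvd_length_add hsc hP hn c hdvd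
  exact reflTransGen_of_path hn c' (hc's.trans hcs) (hc'r.trans hcr) hc'

end Eln

end DGraph

open DGraph in
theorem Eln_components_general (G : DGraph) [Nonempty G.V]
    (hsc : StronglyConnected G) (hns : NoSources G)
    (n : ℕ) (hn : 0 < n) (P : ℕ) (hP : IsGCDOf P (CycleLengths G)) :
    (∀ v w : G.V, Comp (Eln G n) (vtx G n hn v) (vtx G n hn w) ↔ SimRel G (Nat.gcd P n) v w) ∧
    (∀ p q : (Eln G n).V, Comp (Eln G n) p q →
      ∃ Q : Path (Eln G n), Q.src = q ∧ Q.rng = p) ∧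
    (StronglyConnected (Eln G n) ↔ Nat.gcd P n = 1) := by
  have hdP := Nat.gcd_dvd_left P n
  have comp_src {μ ν : (Eln G n).V} :
      Comp (Eln G n) μ ν → SimRel G (P.gcd n) μ.1.src ν.1.src :=
    Eln.rel_src_of_comp (simRel_equivalence hsc hP hdP)
      fun p hp => ⟨p, rfl, rfl, hp ▸ Nat.gcd_dvd_right P n⟩
  have reach {μ ν : (Eln G n).V} (h : SimRel G (P.gcd n) μ.1.src ν.1.src) :=
    Eln.reflTransGen_of_simRel hn hsc hP h
  refine ⟨fun v w => ⟨comp_src, fun h => comp_of_reflTransGen (reach h)⟩,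
    fun μ ν h => exists_path_of_reflTransGen (reach (comp_src h)),
    fun hE => ?_, fun h μ ν => ?_⟩
  · obtain ⟨e, -⟩ := hns (Classical.arbitrary G.V)
    obtain ⟨Q, hQs, hQr⟩ := hE (vtx G n hn (G.r e)) (vtx G n hn (G.s e))
    have hsim : SimRel G (P.gcd n) (G.r e) (G.s e) :=
      comp_src (hQs ▸ hQr ▸ comp_of_reflTransGen Q.reflTransGen_adj)
    exact Nat.dvd_one.mp (hsim.dvd_length hsc hP hdP (p := (Path.nil G (G.s e)).cons e rfl) rfl rfl)
  · obtain ⟨c, hcs, hcr⟩ := hsc μ.1.src ν.1.src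
    exact exists_path_of_reflTransGen (reach ⟨c, hcs, hcr, h ▸ one_dvd _⟩)

open DGraph in
/-- Let `E` be a strongly connected finite directed graph with no sources
and `n ≥ 1`.  Two vertices `v, w` of `E` lie in the same connected component of `E(n)` iff
`v ∼_n w` (there is a path from `w` to `v` of length divisible by `gcd(P_E, n)`); each
component of `E(n)` is strongly connected; and `E(n)` is strongly connected iff
`gcd(P_E, n) = 1`. -/
theorem Eln_components (G : DGraph) [Finite G.V] [Finite G.E] [Nonempty G.V]
    (hsc : StronglyConnected G) (hns : NoSources G)
    (n : ℕ) (hn : 0 < n) (P : ℕ) (hP : IsGCDOf P (CycleLengths G)) :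
    (∀ v w : G.V, Comp (Eln G n) (vtx G n hn v) (vtx G n hn w) ↔ SimRel G (Nat.gcd P n) v w) ∧
    (∀ p q : (Eln G n).V, Comp (Eln G n) p q →
      ∃ Q : Path (Eln G n), Q.src = q ∧ Q.rng = p) ∧
    (StronglyConnected (Eln G n) ↔ Nat.gcd P n = 1) :=
  Eln_components_general G hsc hns n hn P hP
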